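/- The r-scaling entropy functional H_r(ν) = −∫ log ν(B(x,r)) dν(x) on the space M of Borel probability measures on a compact ball B ⊂ ℝ^d, equipped with the weak-* topology, is lower semicontinuous: it is the supremum (limit of an increasing sequence) of continuous functionals of the form ν ↦ ∫ min{k, log(1/∫ f_k(x−y) dν(y))} dν(x), where f_k is a decreasing sequence of continuous functions converging pointwise to the indicator of B(0,r). -/

import Mathlib

/-!
Replace the indicator of `B(x, r)` by continuous cutoffs `φₙ(dist y x)` decreasing to it, and
`-log` by its truncation `min n (-log ·)`. The functionals
`Fₙ(ν) = ∫ min n (-log ∫ φₙ(dist y x) dν(y)) dν(x)` are continuous, because integrating a jointly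
continuous function of `(ν, x)` against `ν` is continuous when the space is compact. Since
`ν(B(x, r)) > 0` for `ν`-a.e. `x`, monotone convergence gives `H_r = ⨆ₙ Fₙ`, and a supremum of
continuous functions is lower semicontinuous.
-/

open MeasureTheory Metric Filter Topology
open scoped BoundedContinuousFunction

namespace MeasureTheory.ProbabilityMeasure

variable {X : Type*} [TopologicalSpace X] [MeasurableSpace X] [OpensMeasurableSpace X]

theorem continuous_integral_boundedContinuousFunction_prod :
    Continuous fun p : ProbabilityMeasure X × (X →ᵇ ℝ) => ∫ x, p.2 x ∂(p.1 : Measure X) := by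
  refine continuous_iff_continuousAt.2 fun p₀ => tendsto_iff_dist_tendsto_zero.2 ?_
  set I : ProbabilityMeasure X × (X →ᵇ ℝ) → ℝ := fun p => ∫ x, p.2 x ∂(p.1 : Measure X)
  have hdist (p : ProbabilityMeasure X × (X →ᵇ ℝ)) :
      dist (I p) (I p₀) ≤ dist p.2 p₀.2 + dist (I (p.1, p₀.2)) (I p₀) := by
    refine (dist_triangle _ (I (p.1, p₀.2)) _).trans (add_le_add_left ?_ _)
    rw [dist_eq_norm, ← integral_sub (p.2.integrable _) (p₀.2.integrable _), dist_eq_norm]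
    exact (p.2 - p₀.2).norm_integral_le_norm _
  have hbound : Continuous fun p : ProbabilityMeasure X × (X →ᵇ ℝ) =>
      dist p.2 p₀.2 + dist (I (p.1, p₀.2)) (I p₀) :=
    (continuous_snd.dist continuous_const).add
      (((continuous_integral_boundedContinuousFunction p₀.2).comp continuous_fst).dist
        continuous_const)
  exact squeeze_zero (fun _ => dist_nonneg) hdist (by simpa using hbound.tendsto p₀)

theorem continuous_integral_of_continuous_uncurry [CompactSpace X] {Y : Type*}
    [TopologicalSpace Y] {g : Y → X → ℝ} (hg : Continuous (Function.uncurry g))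
    {μ : Y → ProbabilityMeasure X} (hμ : Continuous μ) :
    Continuous fun y => ∫ x, g y x ∂(μ y : Measure X) := by
  let G : Y → C(X, ℝ) := fun y => ⟨g y, hg.comp (Continuous.prodMk_right y)⟩
  have hG : Continuous G := ContinuousMap.continuous_of_continuous_uncurry G hg
  exact continuous_integral_boundedContinuousFunction_prod.comp
    (hμ.prodMk ((ContinuousMap.isometryEquivBoundedOfCompact X ℝ).continuous.comp hG))

end MeasureTheory.ProbabilityMeasure

theorem MeasureTheory.Measure.ae_measure_closedBall_pos {X : Type*} [PseudoMetricSpace X]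
    [SecondCountableTopology X] [MeasurableSpace X] (μ : Measure X) {r : ℝ} (hr : 0 < r) :
    ∀ᵐ x ∂μ, 0 < μ (closedBall x r) := by
  filter_upwards [Measure.support_mem_ae] with x hx
  exact (Measure.mem_support_iff_forall x).1 hx _ (closedBall_mem_nhds x hr)

def ballCutoff (r : ℝ) (n : ℕ) (t : ℝ) : ℝ := max 0 (min 1 (1 - (n + 1) * (t - r)))

theorem continuous_ballCutoff (r : ℝ) (n : ℕ) : Continuous (ballCutoff r n) := by
  unfold ballCutoff; fun_prop

theorem ballCutoff_nonneg (r : ℝ) (n : ℕ) (t : ℝ) : 0 ≤ ballCutoff r n t := le_max_left _ _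

theorem ballCutoff_le_one (r : ℝ) (n : ℕ) (t : ℝ) : ballCutoff r n t ≤ 1 :=
  max_le zero_le_one (min_le_left _ _)

theorem ballCutoff_of_le {r t : ℝ} (n : ℕ) (ht : t ≤ r) : ballCutoff r n t = 1 := by
  have : 1 ≤ 1 - ((n : ℝ) + 1) * (t - r) := by nlinarith
  simp [ballCutoff, this]

theorem antitone_ballCutoff (r t : ℝ) : Antitone fun n : ℕ => ballCutoff r n t := by
  intro m n hmn
  rcases le_or_gt t r with ht | ht
  · simp only [ballCutoff_of_le _ ht, le_refl]
  · have : (m : ℝ) ≤ n := by exact_mod_cast hmn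
    show ballCutoff r n t ≤ ballCutoff r m t
    unfold ballCutoff
    gcongr

theorem tendsto_ballCutoff (r t : ℝ) :
    Tendsto (fun n => ballCutoff r n t) atTop (𝓝 ((Set.Iic r).indicator 1 t)) := by
  rcases le_or_gt t r with ht | ht
  · simp [ballCutoff_of_le _ ht, ht]
  · have h : Tendsto (fun n : ℕ => ((n : ℝ) + 1) * (t - r)) atTop atTop :=
      (tendsto_natCast_atTop_atTop.atTop_add tendsto_const_nhds).atTop_mul_const (sub_pos.2 ht)
    rw [Set.indicator_of_notMem (s := Set.Iic r) (not_le.2 ht)]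
    refine tendsto_const_nhds.congr' ?_
    filter_upwards [h.eventually_ge_atTop 1] with n hn
    exact (max_eq_left (min_le_of_right_le (by linarith))).symm

/-- `truncNegLog n s = min n (-log s)` for `0 < s`; written with `max` inside the logarithm so
that it stays continuous at `s ≤ 0`, where `Real.log` takes junk values. -/
noncomputable def truncNegLog (n : ℕ) (s : ℝ) : ℝ := -Real.log (max s (Real.exp (-n)))

theorem continuous_truncNegLog (n : ℕ) : Continuous (truncNegLog n) :=
  (Real.continuousOn_log.comp_continuous (continuous_id.max continuous_const)
    fun _ => (lt_max_of_lt_right (Real.exp_pos _)).ne').neg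

theorem truncNegLog_nonneg (n : ℕ) {s : ℝ} (hs : s ≤ 1) : 0 ≤ truncNegLog n s :=
  neg_nonneg.2 <| Real.log_nonpos (le_max_of_le_right (Real.exp_pos _).le)
    (max_le hs (Real.exp_le_one_iff.2 (by simp)))

theorem truncNegLog_le_truncNegLog {m n : ℕ} {s t : ℝ} (hmn : m ≤ n) (hts : t ≤ s) :
    truncNegLog m s ≤ truncNegLog n t :=
  neg_le_neg <| Real.log_le_log (lt_max_of_lt_right (Real.exp_pos _)) <|
    max_le_max hts (Real.exp_le_exp.2 (by simpa using hmn))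

theorem tendsto_truncNegLog {s : ℕ → ℝ} {c : ℝ} (hc : 0 < c) (hs : Tendsto s atTop (𝓝 c)) :
    Tendsto (fun n => truncNegLog n (s n)) atTop (𝓝 (-Real.log c)) := by
  have hexp : Tendsto (fun n : ℕ => Real.exp (-n)) atTop (𝓝 0) :=
    Real.tendsto_exp_neg_atTop_nhds_zero.comp tendsto_natCast_atTop_atTop
  have hmax := hs.max hexp
  rw [max_eq_left hc.le] at hmax
  exact ((Real.continuousAt_log hc.ne').tendsto.comp hmax).neg

section SmoothedBallMeasure

variable {X : Type*} [PseudoMetricSpace X] [MeasurableSpace X]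

noncomputable def smoothedBallMeasure (μ : Measure X) (r : ℝ) (n : ℕ) (x : X) : ℝ :=
  ∫ y, ballCutoff r n (dist y x) ∂μ

variable [OpensMeasurableSpace X]

theorem integrable_ballCutoff_dist (μ : Measure X) [IsFiniteMeasure μ] (r : ℝ) (n : ℕ) (x : X) :
    Integrable (fun y => ballCutoff r n (dist y x)) μ :=
  .of_bound ((continuous_ballCutoff r n).comp
      (continuous_id.dist continuous_const)).aestronglyMeasurable 1
    (ae_of_all _ fun _ => by
      rw [Real.norm_of_nonneg (ballCutoff_nonneg ..)]; exact ballCutoff_le_one ..)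

theorem smoothedBallMeasure_le_one (μ : Measure X) [IsProbabilityMeasure μ] (r : ℝ) (n : ℕ)
    (x : X) : smoothedBallMeasure μ r n x ≤ 1 := by
  simpa [smoothedBallMeasure] using
    integral_mono (integrable_ballCutoff_dist μ r n x) (integrable_const 1)
      fun y => ballCutoff_le_one r n (dist y x)

theorem antitone_smoothedBallMeasure (μ : Measure X) [IsFiniteMeasure μ] (r : ℝ) (x : X) :
    Antitone fun n => smoothedBallMeasure μ r n x := fun _ _ hmn =>
  integral_mono (integrable_ballCutoff_dist μ r _ x) (integrable_ballCutoff_dist μ r _ x)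
    fun y => antitone_ballCutoff r (dist y x) hmn

theorem tendsto_smoothedBallMeasure (μ : Measure X) [IsFiniteMeasure μ] (r : ℝ) (x : X) :
    Tendsto (fun n => smoothedBallMeasure μ r n x) atTop (𝓝 (μ.real (closedBall x r))) := by
  have hlim (y : X) : Tendsto (fun n => ballCutoff r n (dist y x)) atTop
      (𝓝 ((closedBall x r).indicator 1 y)) := by
    simpa [Set.indicator, mem_closedBall] using tendsto_ballCutoff r (dist y x)
  rw [← integral_indicator_one measurableSet_closedBall]
  refine tendsto_integral_of_dominated_convergence (fun _ => 1)
    (fun n => (integrable_ballCutoff_dist μ r n x).aestronglyMeasurable) (integrable_const 1)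
    (fun n => ae_of_all _ fun y => ?_) (ae_of_all _ hlim)
  rw [Real.norm_of_nonneg (ballCutoff_nonneg ..)]
  exact ballCutoff_le_one ..

theorem iSup_ofReal_truncNegLog_smoothedBallMeasure (μ : Measure X) [IsProbabilityMeasure μ]
    {r : ℝ} {x : X} (hx : 0 < μ (closedBall x r)) :
    ⨆ n, ENNReal.ofReal (truncNegLog n (smoothedBallMeasure μ r n x)) =
      ENNReal.ofReal (-Real.log (μ.real (closedBall x r))) := by
  refine iSup_eq_of_tendsto (fun m n hmn => ENNReal.ofReal_le_ofReal ?_)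
    (ENNReal.tendsto_ofReal (tendsto_truncNegLog ?_ (tendsto_smoothedBallMeasure μ r x)))
  · exact truncNegLog_le_truncNegLog hmn (antitone_smoothedBallMeasure μ r x hmn)
  · exact ENNReal.toReal_pos hx.ne' (measure_ne_top _ _)

theorem continuous_smoothedBallMeasure [CompactSpace X] (r : ℝ) (n : ℕ) :
    Continuous fun p : ProbabilityMeasure X × X =>
      smoothedBallMeasure (p.1 : Measure X) r n p.2 :=
  ProbabilityMeasure.continuous_integral_of_continuous_uncurry
    (g := fun p y => ballCutoff r n (dist y p.2))
    ((continuous_ballCutoff r n).comp (continuous_snd.dist (continuous_snd.comp continuous_fst)))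
    continuous_fst

end SmoothedBallMeasure

section ScalingEntropy

variable {X : Type*} [PseudoMetricSpace X] [CompactSpace X] [MeasurableSpace X]
  [OpensMeasurableSpace X]

noncomputable def approxScalingEntropy (r : ℝ) (n : ℕ) (ν : ProbabilityMeasure X) : ℝ :=
  ∫ x, truncNegLog n (smoothedBallMeasure (ν : Measure X) r n x) ∂(ν : Measure X)

theorem continuous_approxScalingEntropy (r : ℝ) (n : ℕ) :
    Continuous (approxScalingEntropy (X := X) r n) :=
  ProbabilityMeasure.continuous_integral_of_continuous_uncurry
    (g := fun (ν : ProbabilityMeasure X) x =>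
      truncNegLog n (smoothedBallMeasure (ν : Measure X) r n x))
    ((continuous_truncNegLog n).comp (continuous_smoothedBallMeasure r n)) continuous_id

theorem continuous_truncNegLog_smoothedBallMeasure (ν : ProbabilityMeasure X) (r : ℝ) (n : ℕ) :
    Continuous fun x => truncNegLog n (smoothedBallMeasure (ν : Measure X) r n x) :=
  (continuous_truncNegLog n).comp
    ((continuous_smoothedBallMeasure r n).comp (continuous_const.prodMk continuous_id))

theorem ofReal_approxScalingEntropy (r : ℝ) (n : ℕ) (ν : ProbabilityMeasure X) :
    ENNReal.ofReal (approxScalingEntropy r n ν) =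
      ∫⁻ x, ENNReal.ofReal (truncNegLog n (smoothedBallMeasure (ν : Measure X) r n x))
        ∂(ν : Measure X) :=
  ofReal_integral_eq_lintegral_ofReal
    ((continuous_truncNegLog_smoothedBallMeasure ν r n).integrable_of_hasCompactSupport
      (.of_compactSpace _))
    (ae_of_all _ fun x => truncNegLog_nonneg n (smoothedBallMeasure_le_one _ r n x))

theorem lintegral_neg_log_measure_closedBall_eq_iSup {r : ℝ} (hr : 0 < r)
    (ν : ProbabilityMeasure X) :
    ∫⁻ x, ENNReal.ofReal (-Real.log ((ν : Measure X).real (closedBall x r))) ∂(ν : Measure X) =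
      ⨆ n, ENNReal.ofReal (approxScalingEntropy r n ν) := by
  simp_rw [ofReal_approxScalingEntropy]
  rw [← lintegral_iSup]
  · refine lintegral_congr_ae ?_
    -- Where `ν (closedBall x r) = 0`, the junk value `Real.log 0 = 0` would break the limit.
    filter_upwards [Measure.ae_measure_closedBall_pos (ν : Measure X) hr] with x hx
    exact (iSup_ofReal_truncNegLog_smoothedBallMeasure _ hx).symm
  · exact fun n => (continuous_truncNegLog_smoothedBallMeasure ν r n).measurable.ennreal_ofReal
  · exact fun m n hmn x => ENNReal.ofReal_le_ofReal <|
      truncNegLog_le_truncNegLog hmn (antitone_smoothedBallMeasure _ r x hmn)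

end ScalingEntropy

/-- The `r`-scaling entropy `H_r(ν) = −∫ log ν(B(x,r)) dν(x)`, as a `[0,∞]`-valued
functional on the space of Borel probability measures on a compact metric space (e.g. a
compact ball in `ℝ^d`) with the weak-* topology, is lower semicontinuous. -/
theorem scaling_entropy_lowerSemicontinuous
    {X : Type*} [MetricSpace X] [CompactSpace X]
    [MeasurableSpace X] [BorelSpace X]
    (r : ℝ) (hr : 0 < r) :
    LowerSemicontinuous (fun ν : ProbabilityMeasure X =>
      ∫⁻ x, ENNReal.ofReal (-Real.log ((ν (Metric.closedBall x r) : NNReal) : ℝ))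
        ∂(ν : Measure X)) := by
  show LowerSemicontinuous fun ν : ProbabilityMeasure X =>
    ∫⁻ x, ENNReal.ofReal (-Real.log ((ν : Measure X).real (closedBall x r))) ∂(ν : Measure X)
  simp only [lintegral_neg_log_measure_closedBall_eq_iSup hr]
  exact lowerSemicontinuous_iSup fun n =>
    (ENNReal.continuous_ofReal.comp (continuous_approxScalingEntropy r n)).lowerSemicontinuous
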